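/- Let ν ∈ ℕ with ν ≥ 1. The polynomial W_{ν−1}(τ) := Σ_{i=0}^{⌊(ν−1)/2⌋} ((2ν−4i−1)/((ν−i)(2i+1)))·P_{ν−2i−1}(τ) satisfies the inhomogeneous Legendre equation (1−τ²)·W_{ν−1}″(τ) − 2τ·W_{ν−1}′(τ) + ν(ν+1)·W_{ν−1}(τ) = 2·P_ν′(τ) for all τ ∈ ℝ. -/
import Mathlib


/-- The Legendre polynomial `P_ν` via the Rodrigues formula. -/
noncomputable def legendreP (ν : ℕ) (τ : ℝ) : ℝ :=
  ((-1 : ℝ) ^ ν / (2 ^ ν * Nat.factorial ν)) *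
    iteratedDeriv ν (fun t : ℝ => (1 - t ^ 2) ^ ν) τ

/-- The polynomial `W_{ν-1}` (with `W_{-1} = 0`): `legendreW ν` denotes `W_{ν-1}`. -/
noncomputable def legendreW (ν : ℕ) (τ : ℝ) : ℝ :=
  if ν = 0 then 0 else
    ∑ i ∈ Finset.range ((ν - 1) / 2 + 1),
      ((2 * (ν : ℝ) - 4 * (i : ℝ) - 1) / (((ν : ℝ) - (i : ℝ)) * (2 * (i : ℝ) + 1))) *
        legendreP (ν - 2 * i - 1) τ

/-- The Legendre function of the second kind `q_ν` on `(-1,1)`. -/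
noncomputable def legendreQ (ν : ℕ) (τ : ℝ) : ℝ :=
  (1 / 2) * legendreP ν τ * Real.log ((1 + τ) / (1 - τ)) - legendreW ν τ


open Polynomial

noncomputable def rpoly (n : ℕ) : ℝ[X] :=
  C ((-1 : ℝ) ^ n / (2 ^ n * Nat.factorial n)) * derivative^[n] ((1 - X ^ 2) ^ n)

lemma lx (f : ℝ[X]) (k : ℕ) :
    derivative^[k+1] (X * f) = X * derivative^[k+1] f + C ((k : ℝ) + 1) * derivative^[k] f := by
  induction k with
  | zero => simp [derivative_mul]; ring
  | succ k ih =>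
    rw [Function.iterate_succ_apply', ih]
    rw [Function.iterate_succ_apply' derivative (k+1), Function.iterate_succ_apply' derivative k]
    simp only [derivative_mul, derivative_add, derivative_X, derivative_C]
    push_cast
    simp only [map_add, map_mul, map_one, map_sub, map_neg, map_ofNat]
    ring

lemma lq (f : ℝ[X]) (k : ℕ) :
    derivative^[k+2] ((1 - X ^ 2) * f) = (1 - X ^ 2) * derivative^[k+2] f
      - C (2 * ((k : ℝ) + 2)) * (X * derivative^[k+1] f)
      - C (((k : ℝ) + 2) * ((k : ℝ) + 1)) * derivative^[k] f := by
  induction k with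
  | zero =>
    simp only [show (2:ℕ) = 1 + 1 from rfl]
    simp [derivative_mul, derivative_pow]
    simp only [map_add, map_mul, map_one, map_sub, map_neg, map_ofNat]
    ring
  | succ k ih =>
    rw [Function.iterate_succ_apply', ih]
    rw [Function.iterate_succ_apply' derivative (k+2), Function.iterate_succ_apply' derivative (k+1),
        Function.iterate_succ_apply' derivative k]
    simp only [derivative_sub, derivative_mul, derivative_one, derivative_pow, derivative_X,
      derivative_C]
    push_cast
    simp only [map_add, map_mul, map_one, map_sub, map_neg, map_ofNat]
    ring

lemma keyE (n : ℕ) :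
    (1 - X ^ 2) * derivative ((1 - X ^ 2) ^ n) + C (2 * (n : ℝ)) * (X * (1 - X ^ 2) ^ n) = 0 := by
  cases n with
  | zero => simp
  | succ m =>
    rw [derivative_pow]
    simp only [derivative_sub, derivative_one, derivative_pow, derivative_X, derivative_C]
    push_cast
    simp only [map_add, map_mul, map_one, map_sub, map_neg, map_ofNat]
    ring_nf

lemma itadd (k : ℕ) (p q : ℝ[X]) :
    derivative^[k] (p + q) = derivative^[k] p + derivative^[k] q := by
  induction k with
  | zero => rfl
  | succ k ih => rw [Function.iterate_succ_apply', ih, derivative_add,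
      Function.iterate_succ_apply', Function.iterate_succ_apply']

lemma rawODE (m : ℕ) :
    (1 - X ^ 2) * derivative^[m+3] ((1 - X ^ 2) ^ (m+1))
      - C 2 * (X * derivative^[m+2] ((1 - X ^ 2) ^ (m+1)))
      + C (((m : ℝ) + 1) * ((m : ℝ) + 2)) * derivative^[m+1] ((1 - X ^ 2) ^ (m+1)) = 0 := by
  have hE := congrArg (derivative^[m+2]) (keyE (m+1))
  set u : ℝ[X] := (1 - X ^ 2) ^ (m+1) with hu
  rw [itadd, iterate_derivative_zero, iterate_derivative_C_mul] at hE
  have h1 : derivative^[m+2] ((1 - X ^ 2) * derivative u)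
      = (1 - X ^ 2) * derivative^[m+3] u - C (2 * ((m : ℝ) + 2)) * (X * derivative^[m+2] u)
        - C (((m : ℝ) + 2) * ((m : ℝ) + 1)) * derivative^[m+1] u := by
    rw [lq (derivative u) m]
    rw [← Function.iterate_succ_apply derivative (m+2), ← Function.iterate_succ_apply derivative (m+1),
        ← Function.iterate_succ_apply derivative m]
  have h2 : derivative^[m+2] (X * u) = X * derivative^[m+2] u + C ((m : ℝ) + 2) * derivative^[m+1] u := by
    have := lx u (m+1)
    push_cast at this ⊢
    convert this using 3 <;> ring
  rw [h1, h2] at hE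
  push_cast at hE
  simp only [map_add, map_mul, map_one, map_ofNat] at hE ⊢
  linear_combination hE

lemma rpoly_zero : rpoly 0 = 1 := by simp [rpoly]

lemma rpoly_one : rpoly 1 = X := by
  simp [rpoly, derivative_pow, Nat.factorial]
  rw [← mul_assoc, ← map_mul]
  norm_num

/-- Legendre differential equation at polynomial level. -/
lemma odeP (n : ℕ) :
    (1 - X ^ 2) * derivative (derivative (rpoly n)) - C 2 * (X * derivative (rpoly n))
      + C ((n : ℝ) * ((n : ℝ) + 1)) * rpoly n = 0 := by
  cases n with
  | zero => simp [rpoly_zero]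
  | succ m =>
    unfold rpoly
    rw [derivative_C_mul, derivative_C_mul,
      ← Function.iterate_succ_apply' derivative (m+1), ← Function.iterate_succ_apply' derivative (m+2)]
    have h := rawODE m
    push_cast
    simp only [map_add, map_mul, map_one, map_ofNat, map_natCast] at h ⊢
    linear_combination (C ((-1 : ℝ) ^ (m+1) / (2 ^ (m+1) * Nat.factorial (m+1)))) * h

/-- Identity I: `P'_{n+1} = X P'_n + (n+1) P_n`. -/
lemma idI (n : ℕ) :
    derivative (rpoly (n+1)) = X * derivative (rpoly n) + C ((n : ℝ) + 1) * rpoly n := by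
  have hdu : derivative ((1 - X^2)^(n+1)) = C (-(2*((n:ℝ)+1))) * (X * (1 - X^2)^n) := by
    rw [derivative_pow]
    simp only [derivative_sub, derivative_one, derivative_pow, derivative_X, derivative_C]
    push_cast
    simp only [map_add, map_mul, map_one, map_ofNat, map_natCast, map_neg]
    ring
  unfold rpoly
  rw [derivative_C_mul, derivative_C_mul,
    ← Function.iterate_succ_apply' derivative (n+1),
    Function.iterate_succ_apply derivative (n+1), hdu, iterate_derivative_C_mul, lx _ n,
    ← Function.iterate_succ_apply' derivative n]
  have hc : ((-1 : ℝ) ^ (n+1) / (2 ^ (n+1) * Nat.factorial (n+1))) * (-(2*((n:ℝ)+1)))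
      = (-1 : ℝ) ^ n / (2 ^ n * Nat.factorial n) := by
    rw [pow_succ, pow_succ, Nat.factorial_succ]
    have h1 : (Nat.factorial n : ℝ) ≠ 0 := Nat.cast_ne_zero.mpr (Nat.factorial_ne_zero n)
    push_cast
    field_simp
  have hc' : C ((-1 : ℝ) ^ (n+1) / (2 ^ (n+1) * Nat.factorial (n+1))) * C (-(2*((n:ℝ)+1)))
      = C ((-1 : ℝ) ^ n / (2 ^ n * Nat.factorial n)) := by rw [← map_mul]; exact congrArg C hc
  linear_combination (X * derivative^[n+1] ((1 - X^2)^n) + C ((n:ℝ)+1) * derivative^[n] ((1 - X^2)^n)) * hc'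

/-- Identity III: `(1-X²) P'_n = (n+1)(X P_n - P_{n+1})`. -/
lemma idIII (n : ℕ) :
    (1 - X ^ 2) * derivative (rpoly n) = C ((n : ℝ) + 1) * (X * rpoly n - rpoly (n+1)) := by
  have hI := idI n
  have hI' := congrArg derivative (idI n)
  have hOn := odeP n
  have hOn1 := odeP (n+1)
  simp only [derivative_add, derivative_mul, derivative_X, derivative_C, one_mul, zero_mul,
    zero_add, add_zero] at hI'
  have hne : (C ((n : ℝ) + 2) : ℝ[X]) ≠ 0 := by
    refine C_ne_zero.mpr ?_
    positivity
  have key : C ((n : ℝ) + 2) * ((1 - X ^ 2) * derivative (rpoly n)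
      - C ((n : ℝ) + 1) * (X * rpoly n - rpoly (n+1))) = 0 := by
    push_cast at hOn1
    simp only [map_add, map_mul, map_one, map_ofNat, map_natCast] at hOn1 hOn hI hI' ⊢
    linear_combination hOn1 - (1 - X ^ 2) * hI' - X * hOn + 2 * X * hI
  rcases mul_eq_zero.mp key with h | h
  · exact absurd h hne
  · linear_combination h

/-- Identity B: `P'_{n+2} = (2n+3) P_{n+1} + P'_n`. -/
lemma idB (n : ℕ) :
    derivative (rpoly (n+2)) = C (2 * (n : ℝ) + 3) * rpoly (n+1) + derivative (rpoly n) := by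
  have h1 := idI (n+1)
  have h2 := idI n
  have h3 := idIII n
  push_cast at h1
  simp only [map_add, map_mul, map_one, map_ofNat, map_natCast] at h1 h2 h3 ⊢
  linear_combination h1 + X * h2 - h3

/-- Telescoped sum identity (two consecutive instances for the induction). -/
lemma sumId (k : ℕ) :
    (derivative (rpoly (k+1)) = ∑ i ∈ Finset.range ((k+1-1)/2+1),
        C (2 * ((k+1 : ℕ) : ℝ) - 4 * (i:ℝ) - 1) * rpoly (k+1-2*i-1))
    ∧ (derivative (rpoly (k+2)) = ∑ i ∈ Finset.range ((k+2-1)/2+1),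
        C (2 * ((k+2 : ℕ) : ℝ) - 4 * (i:ℝ) - 1) * rpoly (k+2-2*i-1)) := by
  induction k with
  | zero =>
    constructor
    · simp [rpoly_one, rpoly_zero]
      norm_num [map_ofNat]
    · have h := idB 0
      simp only [rpoly_zero, derivative_one, add_zero, Nat.cast_zero, mul_zero, zero_add] at h
      rw [show (0+2-1)/2+1 = 1 from rfl, Finset.sum_range_one, h]
      rw [show (0:ℕ)+1+1 = 0+2 from rfl]
      congr 1
      exact congrArg C (by norm_num)
  | succ k ih =>
    refine ⟨ih.2, ?_⟩
    calc derivative (rpoly (k+1+2))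
        = C (2 * ((k+3 : ℕ) : ℝ) - 4 * ((0:ℕ):ℝ) - 1) * rpoly (k+3-2*0-1)
            + derivative (rpoly (k+1)) := by
          have hB := idB (k+1)
          rw [hB]
          have h1 : k+3-2*0-1 = k+1+1 := by omega
          rw [h1]
          congr 2
          exact congrArg C (by push_cast; ring)
      _ = C (2 * ((k+3 : ℕ) : ℝ) - 4 * ((0:ℕ):ℝ) - 1) * rpoly (k+3-2*0-1)
            + ∑ i ∈ Finset.range ((k+1-1)/2+1),
                C (2 * ((k+3 : ℕ) : ℝ) - 4 * (((i+1) : ℕ) : ℝ) - 1) * rpoly (k+3-2*(i+1)-1) := by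
          rw [ih.1]
          congr 1
          refine Finset.sum_congr rfl ?_
          intro i hi
          simp only [Finset.mem_range] at hi
          have h2 : k+1-2*i-1 = k+3-2*(i+1)-1 := by omega
          rw [h2]
          congr 1
          exact congrArg C (by push_cast; ring)
      _ = ∑ i ∈ Finset.range ((k+1+2-1)/2+1),
            C (2 * ((k+1+2 : ℕ) : ℝ) - 4 * (i:ℝ) - 1) * rpoly (k+1+2-2*i-1) := by
          rw [show (k+1+2-1)/2+1 = ((k+1-1)/2+1)+1 by omega]
          conv_rhs => rw [Finset.sum_range_succ']
          simp only [show k+1+2 = k+3 from rfl]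
          exact add_comm _ _

noncomputable def wpoly (ν : ℕ) : ℝ[X] :=
  ∑ i ∈ Finset.range ((ν-1)/2+1),
    C ((2 * (ν:ℝ) - 4 * (i:ℝ) - 1) / (((ν:ℝ) - (i:ℝ)) * (2 * (i:ℝ) + 1))) * rpoly (ν-2*i-1)

lemma main_poly (ν : ℕ) (hν : 1 ≤ ν) :
    (1 - X ^ 2) * derivative (derivative (wpoly ν)) - C 2 * (X * derivative (wpoly ν))
      + C ((ν:ℝ) * ((ν:ℝ) + 1)) * wpoly ν = C 2 * derivative (rpoly ν) := by
  obtain ⟨k, rfl⟩ : ∃ k, ν = k + 1 := ⟨ν - 1, by omega⟩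
  unfold wpoly
  rw [derivative_sum, derivative_sum]
  simp only [Finset.mul_sum]
  rw [← Finset.sum_sub_distrib, ← Finset.sum_add_distrib, (sumId k).1, Finset.mul_sum]
  refine Finset.sum_congr rfl fun i hi => ?_
  simp only [Finset.mem_range] at hi
  have h2i : 2 * i ≤ k := by omega
  set c : ℝ := (2 * ((k+1:ℕ):ℝ) - 4 * (i:ℝ) - 1) / ((((k+1:ℕ)):ℝ) - (i:ℝ)) / (2 * (i:ℝ) + 1) with hc
  have hm : (((k+1-2*i-1) : ℕ) : ℝ) = (k:ℝ) - 2*(i:ℝ) := by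
    have h : k+1-2*i-1 = k - 2*i := by omega
    rw [h, Nat.cast_sub h2i]
    push_cast
    ring
  have hODE := odeP (k+1-2*i-1)
  rw [hm] at hODE
  have hval : (2 * ((k+1:ℕ):ℝ) - 4 * (i:ℝ) - 1) / ((((k+1:ℕ)):ℝ) - (i:ℝ)) / (2 * (i:ℝ) + 1)
      * ((((k+1:ℕ)):ℝ) * ((((k+1:ℕ)):ℝ) + 1) - ((k:ℝ) - 2*(i:ℝ)) * (((k:ℝ) - 2*(i:ℝ)) + 1))
      = 2 * (2 * ((k+1:ℕ):ℝ) - 4 * (i:ℝ) - 1) := by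
    have hik : (i:ℝ) ≤ (k:ℝ) := Nat.cast_le.mpr (by omega)
    have d1 : (k:ℝ) + 1 - (i:ℝ) ≠ 0 := by intro h; linarith
    have d2 : 2 * (i:ℝ) + 1 ≠ 0 := by positivity
    push_cast
    field_simp
    ring
  have hC' : C ((2 * ((k+1:ℕ):ℝ) - 4 * (i:ℝ) - 1) / (((((k+1:ℕ)):ℝ) - (i:ℝ)) * (2 * (i:ℝ) + 1)))
        * (C ((((k+1:ℕ)):ℝ) * ((((k+1:ℕ)):ℝ) + 1))
          - C (((k:ℝ) - 2*(i:ℝ)) * (((k:ℝ) - 2*(i:ℝ)) + 1)))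
      = C 2 * C (2 * ((k+1:ℕ):ℝ) - 4 * (i:ℝ) - 1) := by
    rw [← map_sub, ← map_mul, ← map_mul]
    refine congrArg C ?_
    rw [div_mul_eq_div_div]
    exact hval
  rw [derivative_C_mul, derivative_C_mul]
  linear_combination (C ((2 * ((k+1:ℕ):ℝ) - 4 * (i:ℝ) - 1) / (((((k+1:ℕ)):ℝ) - (i:ℝ)) * (2 * (i:ℝ) + 1)))) * hODE
    + hC' * rpoly (k+1-2*i-1)

lemma evalIter (q : ℝ[X]) (k : ℕ) :
    iteratedDeriv k (fun t : ℝ => q.eval t) = fun t => (derivative^[k] q).eval t := by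
  induction k with
  | zero => simp
  | succ k ih =>
    rw [iteratedDeriv_succ, ih, Function.iterate_succ_apply']
    funext t
    exact Polynomial.deriv _

lemma legendreP_eq (n : ℕ) : legendreP n = fun τ => (rpoly n).eval τ := by
  funext τ
  unfold legendreP rpoly
  have h : (fun t : ℝ => (1 - t ^ 2) ^ n) = fun t => eval t ((1 - X ^ 2 : ℝ[X]) ^ n) := by
    funext t; simp
  rw [h, evalIter]
  simp

lemma legendreW_eq (ν : ℕ) (hν : 1 ≤ ν) : legendreW ν = fun τ => (wpoly ν).eval τ := by
  funext τ
  unfold legendreW wpoly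
  rw [if_neg (by omega)]
  rw [eval_finset_sum]
  refine Finset.sum_congr rfl fun i _ => ?_
  rw [eval_mul, eval_C, legendreP_eq]

/-- for `ν ≥ 1`, the polynomial `W_{ν-1}` satisfies the inhomogeneous
Legendre equation with source `2 P_ν'`. -/
theorem stmt_10 (ν : ℕ) (hν : 1 ≤ ν) :
    ∀ τ : ℝ,
      (1 - τ ^ 2) * deriv (deriv (legendreW ν)) τ - 2 * τ * deriv (legendreW ν) τ
        + (ν : ℝ) * ((ν : ℝ) + 1) * legendreW ν τ = 2 * deriv (legendreP ν) τ := by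
  intro τ
  have hW : legendreW ν = fun t => (wpoly ν).eval t := legendreW_eq ν hν
  have hW1 : deriv (legendreW ν) = fun t => (derivative (wpoly ν)).eval t := by
    rw [hW]; funext t; exact Polynomial.deriv _
  have hW2 : deriv (deriv (legendreW ν)) = fun t => (derivative (derivative (wpoly ν))).eval t := by
    rw [hW1]; funext t; exact Polynomial.deriv _
  have hP1 : deriv (legendreP ν) τ = (derivative (rpoly ν)).eval τ := by
    rw [legendreP_eq]; exact Polynomial.deriv _
  have hmain := congrArg (eval τ) (main_poly ν hν)
  simp only [eval_add, eval_sub, eval_mul, eval_C, eval_X, eval_pow, eval_one] at hmain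
  rw [hW2, hW1, hP1, congrFun hW τ]
  linear_combination hmain
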